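/- Under the stated assumptions on the proximal point iteration, the sequence {p^k} is Fejér convergent to Ω̄ := ∩_{k≥0} Ω_k: for every w ∈ Ω̄ and every k ∈ ℕ, ‖w − p^{k+1}‖ ≤ ‖w − p^k‖. In particular {p^k} is bounded. -/

import Mathlib

/-!
For `w ∈ Ω̄` we have `F w ⪯ F p^{k+1}`, so by `C`-convexity every point `q` of the segment from
`p^{k+1}` to `w` lies in `Ω_k` and satisfies `F q ⪯ F p^{k+1}`. The scalarization `f_k` is
monotone for `⪯` and satisfies `f_k (y + s e^k) = f_k y + s`, so minimality of `p^{k+1}` forces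
`‖p^{k+1} - p^k‖ ≤ ‖q - p^k‖`: `p^{k+1}` is the point of the segment nearest to `p^k`. Hence
`⟪p^{k+1} - p^k, w - p^{k+1}⟫ ≥ 0`, which gives `‖w - p^{k+1}‖ ≤ ‖w - p^k‖`.
-/

open RealInnerProductSpace Set Filter Topology

section Geometry

variable {E : Type*} [NormedAddCommGroup E] [InnerProductSpace ℝ E]

lemma inner_nonneg_of_forall_norm_le_norm_add_smul {a b : E}
    (h : ∀ t ∈ Ioc (0 : ℝ) 1, ‖a‖ ≤ ‖a + t • b‖) : 0 ≤ ⟪a, b⟫ := by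
  have hpos : ∀ t ∈ Ioc (0 : ℝ) 1, 0 ≤ 2 * ⟪a, b⟫ + t * ‖b‖ ^ 2 := by
    intro t ht
    have hsq := pow_le_pow_left₀ (norm_nonneg _) (h t ht) 2
    rw [norm_add_sq_real, inner_smul_right, norm_smul, Real.norm_of_nonneg ht.1.le] at hsq
    exact (mul_nonneg_iff_of_pos_left ht.1).1 (by nlinarith)
  have hlim : Tendsto (fun t : ℝ => 2 * ⟪a, b⟫ + t * ‖b‖ ^ 2) (𝓝[>] 0) (𝓝 (2 * ⟪a, b⟫)) :=
    ((continuous_const.add (continuous_id.mul continuous_const)).tendsto' 0 _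
      (by simp)).mono_left nhdsWithin_le_nhds
  linarith [ge_of_tendsto hlim (mem_of_superset (Ioc_mem_nhdsGT one_pos) hpos)]

lemma norm_le_norm_add_of_inner_nonneg {a b : E} (h : 0 ≤ ⟪a, b⟫) : ‖b‖ ≤ ‖a + b‖ := by
  refine (pow_le_pow_iff_left₀ (norm_nonneg _) (norm_nonneg _) two_ne_zero).1 ?_
  rw [norm_add_sq_real]
  nlinarith [sq_nonneg ‖a‖]

end Geometry

section InnerDual

variable {W : Type*} [NormedAddCommGroup W] [InnerProductSpace ℝ W]

lemma inner_pos_of_mem_interior_innerDual [CompleteSpace W] {Z : Set W} {e z : W}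
    (he : e ∈ interior (ProperCone.innerDual Z : Set W)) (hz : z ∈ Z) (hz0 : z ≠ 0) :
    0 < ⟪e, z⟫ := by
  have hnear : ∀ᶠ t in 𝓝 (0 : ℝ), e - t • z ∈ (ProperCone.innerDual Z : Set W) :=
    ((continuous_const.sub (continuous_id.smul continuous_const)).tendsto' 0 e
      (by simp)).eventually (mem_interior_iff_mem_nhds.1 he)
  obtain ⟨t, hmem, ht⟩ :=
    ((hnear.filter_mono nhdsWithin_le_nhds).and (self_mem_nhdsWithin (s := Ioi 0))).exists
  have hinner : 0 ≤ ⟪z, e - t • z⟫ := hmem hz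
  rw [inner_sub_right, real_inner_smul_right, real_inner_self_eq_norm_sq,
    real_inner_comm] at hinner
  have : 0 < t * ‖z‖ ^ 2 := by have := norm_pos_iff.2 hz0; positivity
  linarith

noncomputable def scalarization (Z : Set W) (e y : W) : ℝ :=
  sSup ((fun z => ⟪y, z⟫ / ⟪e, z⟫) '' Z)

variable {Z : Set W} {e : W}

lemma bddAbove_image_inner_div (hZc : IsCompact Z) (he : ∀ z ∈ Z, 0 < ⟪e, z⟫) (y : W) :
    BddAbove ((fun z => ⟪y, z⟫ / ⟪e, z⟫) '' Z) :=
  hZc.bddAbove_image <| ContinuousOn.div (by fun_prop) (by fun_prop) fun z hz => (he z hz).ne'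

lemma scalarization_add_smul (hZ : Z.Nonempty) (hZc : IsCompact Z) (he : ∀ z ∈ Z, 0 < ⟪e, z⟫)
    (y : W) (s : ℝ) : scalarization Z e (y + s • e) = scalarization Z e y + s := by
  have himage : (fun z => ⟪y + s • e, z⟫ / ⟪e, z⟫) '' Z
      = OrderIso.addRight s '' ((fun z => ⟪y, z⟫ / ⟪e, z⟫) '' Z) := by
    rw [image_image]
    refine image_congr fun z hz => ?_
    rw [OrderIso.addRight_apply, inner_add_left, real_inner_smul_left, add_div,
      mul_div_cancel_right₀ _ (he z hz).ne']
  rw [scalarization, himage, ← OrderIso.map_csSup' _ (hZ.image _)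
    (bddAbove_image_inner_div hZc he y)]
  rfl

lemma scalarization_mono [CompleteSpace W] (hZ : Z.Nonempty) (hZc : IsCompact Z)
    (he : ∀ z ∈ Z, 0 < ⟪e, z⟫) {y y' : W} (h : y' - y ∈ ProperCone.innerDual Z) :
    scalarization Z e y ≤ scalarization Z e y' := by
  refine csSup_le (hZ.image _) ?_
  rintro _ ⟨z, hz, rfl⟩
  refine le_csSup_of_le (bddAbove_image_inner_div hZc he y') ⟨z, hz, rfl⟩ ?_
  have hyz : 0 ≤ ⟪z, y' - y⟫ := h hz
  rw [inner_sub_right, real_inner_comm y', real_inner_comm y] at hyz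
  exact div_le_div_of_nonneg_right (by linarith) (he z hz).le

end InnerDual

section ProximalStep

variable {E W : Type*} [NormedAddCommGroup E] [InnerProductSpace ℝ E]
  [AddCommGroup W] [Module ℝ W] {K : PointedCone ℝ W}

def ConeConvex (K : PointedCone ℝ W) (F : E → W) : Prop :=
  ∀ x y : E, ∀ t ∈ Icc (0 : ℝ) 1, t • F x + (1 - t) • F y - F (t • x + (1 - t) • y) ∈ K

lemma ConeConvex.sub_apply_segment_mem {F : E → W} (hF : ConeConvex K F) {w y : E}
    (hw : F y - F w ∈ K) {t : ℝ} (ht : t ∈ Icc (0 : ℝ) 1) :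
    F y - F (t • w + (1 - t) • y) ∈ K := by
  convert K.add_mem (K.smul_mem ht.1 hw) (hF w y t ht) using 1
  module

def IsProximalStep (K : PointedCone ℝ W) (f : W → ℝ) (F : E → W) (lam : ℝ) (e : W)
    (x x' : E) : Prop :=
  F x - F x' ∈ K ∧ ∀ q, F x - F q ∈ K →
    f (F x' + (lam / 2 * ‖x' - x‖ ^ 2) • e) ≤ f (F q + (lam / 2 * ‖q - x‖ ^ 2) • e)

variable {f : W → ℝ} {F : E → W} {lam : ℝ} {e : W} {x x' w : E}

lemma IsProximalStep.norm_sub_le_norm_segment_sub (hstep : IsProximalStep K f F lam e x x')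
    (hF : ConeConvex K F) (hmono : ∀ y y', y' - y ∈ K → f y ≤ f y')
    (hshift : ∀ y s, f (y + s • e) = f y + s) (hlam : 0 < lam) (hw : F x' - F w ∈ K)
    {t : ℝ} (ht : t ∈ Icc (0 : ℝ) 1) : ‖x' - x‖ ≤ ‖t • w + (1 - t) • x' - x‖ := by
  set q := t • w + (1 - t) • x'
  have hq : F x' - F q ∈ K := hF.sub_apply_segment_mem hw ht
  have hle := (hstep.2 q (by simpa using K.add_mem hstep.1 hq)).trans
    (hmono _ (F x' + (lam / 2 * ‖q - x‖ ^ 2) • e) (by simpa using hq))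
  rw [hshift, hshift, add_le_add_iff_left] at hle
  exact (pow_le_pow_iff_left₀ (norm_nonneg _) (norm_nonneg _) two_ne_zero).1
    (le_of_mul_le_mul_left hle (by positivity))

lemma IsProximalStep.norm_sub_le (hstep : IsProximalStep K f F lam e x x')
    (hF : ConeConvex K F) (hmono : ∀ y y', y' - y ∈ K → f y ≤ f y')
    (hshift : ∀ y s, f (y + s • e) = f y + s) (hlam : 0 < lam) (hw : F x' - F w ∈ K) :
    ‖w - x'‖ ≤ ‖w - x‖ := by
  have hinner : 0 ≤ ⟪x' - x, w - x'⟫ := by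
    refine inner_nonneg_of_forall_norm_le_norm_add_smul fun t ht => ?_
    convert hstep.norm_sub_le_norm_segment_sub hF hmono hshift hlam hw
      (Ioc_subset_Icc_self ht) using 2
    module
  simpa using norm_le_norm_add_of_inner_nonneg hinner

end ProximalStep

theorem proximal_sequence_fejer_general {m : ℕ}
    (Z : Set (EuclideanSpace ℝ (Fin m))) (hZne : Z.Nonempty) (hZcomp : IsCompact Z)
    (hZ0 : (0 : EuclideanSpace ℝ (Fin m)) ∉ Z)
    (C : Set (EuclideanSpace ℝ (Fin m)))
    (hC : C = {y : EuclideanSpace ℝ (Fin m) | ∀ z ∈ Z, 0 ≤ ⟪y, z⟫})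
    {n : ℕ} (F : EuclideanSpace ℝ (Fin n) → EuclideanSpace ℝ (Fin m))
    (hFconv : ∀ x y : EuclideanSpace ℝ (Fin n), ∀ t ∈ Set.Icc (0 : ℝ) 1,
      t • F x + (1 - t) • F y - F (t • x + (1 - t) • y) ∈ C)
    (lam : ℕ → ℝ) (hlampos : ∀ k, 0 < lam k)
    (ek : ℕ → EuclideanSpace ℝ (Fin m))
    (hek : ∀ k, ek k ∈ interior C ∧ ‖ek k‖ = 1)
    (fk : ℕ → EuclideanSpace ℝ (Fin m) → ℝ)
    (hfk : ∀ k y, fk k y = sSup ((fun z => ⟪y, z⟫ / ⟪ek k, z⟫) '' Z))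
    (p : ℕ → EuclideanSpace ℝ (Fin n))
    (hiter : ∀ k : ℕ, F (p k) - F (p (k + 1)) ∈ C ∧
      ∀ q : EuclideanSpace ℝ (Fin n), F (p k) - F q ∈ C →
        fk k (F (p (k + 1)) + (lam k / 2 * ‖p (k + 1) - p k‖ ^ 2) • ek k)
          ≤ fk k (F q + (lam k / 2 * ‖q - p k‖ ^ 2) • ek k))
    (hΩbar : (⋂ k : ℕ, {q : EuclideanSpace ℝ (Fin n) | F (p k) - F q ∈ C}).Nonempty) :
    (∀ w ∈ ⋂ k : ℕ, {q : EuclideanSpace ℝ (Fin n) | F (p k) - F q ∈ C},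
      ∀ k : ℕ, ‖w - p (k + 1)‖ ≤ ‖w - p k‖) ∧
    (∃ (c : EuclideanSpace ℝ (Fin n)) (r : ℝ), ∀ k : ℕ, p k ∈ Metric.closedBall c r) := by
  obtain rfl : C = ProperCone.innerDual Z := hC.trans (by ext; simp [real_inner_comm])
  obtain rfl : fk = fun k => scalarization Z (ek k) := funext₂ hfk
  have hpos k : ∀ z ∈ Z, 0 < ⟪ek k, z⟫ := fun z hz =>
    inner_pos_of_mem_interior_innerDual (hek k).1 hz (ne_of_mem_of_not_mem hz hZ0)
  have fejer : ∀ w ∈ ⋂ k : ℕ, {q | F (p k) - F q ∈ (ProperCone.innerDual Z : Set _)},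
      ∀ k, ‖w - p (k + 1)‖ ≤ ‖w - p k‖ := fun w hw k =>
    IsProximalStep.norm_sub_le (K := (ProperCone.innerDual Z).toSubmodule) (hiter k) hFconv
      (fun _ _ => scalarization_mono hZne hZcomp (hpos k))
      (scalarization_add_smul hZne hZcomp (hpos k)) (hlampos k) (mem_iInter.1 hw (k + 1))
  obtain ⟨w, hw⟩ := hΩbar
  refine ⟨fejer, w, ‖w - p 0‖, fun k => ?_⟩
  rw [Metric.mem_closedBall, dist_comm, dist_eq_norm]
  exact antitone_nat_of_succ_le (f := fun k => ‖w - p k‖) (fejer w hw) (Nat.zero_le k)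

/-- For the proximal point iteration for vector optimization (Euclidean instance):
`F` continuous and `C`-convex, `{λ_k}` bounded positive, `e^k ∈ interior C` with
`‖e^k‖ = 1`, `f_k y = sup_{z ∈ Z} ⟪y,z⟫ / ⟪e^k,z⟫`, `Ω_k = {p : F p ⪯_C F (p^k)}`,
`p^{k+1} ∈ Ω_k` minimizing `p ↦ f_k (F p + (λ_k/2) ‖p - p^k‖² • e^k)` over `Ω_k`, and
`Ω̄ = ⋂_k Ω_k ≠ ∅`, the sequence `{p^k}` is Fejér convergent to `Ω̄`; in particular it
is bounded. -/
theorem proximal_sequence_fejer {m : ℕ} (hm : 1 ≤ m)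
    (Z : Set (EuclideanSpace ℝ (Fin m))) (hZne : Z.Nonempty) (hZcomp : IsCompact Z)
    (hZ0 : (0 : EuclideanSpace ℝ (Fin m)) ∉ Z)
    (C : Set (EuclideanSpace ℝ (Fin m)))
    (hC : C = {y : EuclideanSpace ℝ (Fin m) | ∀ z ∈ Z, 0 ≤ ⟪y, z⟫})
    {n : ℕ} (hn : 1 ≤ n) (F : EuclideanSpace ℝ (Fin n) → EuclideanSpace ℝ (Fin m))
    (hFcont : Continuous F)
    (hFconv : ∀ x y : EuclideanSpace ℝ (Fin n), ∀ t ∈ Set.Icc (0 : ℝ) 1,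
      t • F x + (1 - t) • F y - F (t • x + (1 - t) • y) ∈ C)
    (lam : ℕ → ℝ) (hlampos : ∀ k, 0 < lam k) (hlambdd : ∃ B : ℝ, ∀ k, lam k ≤ B)
    (ek : ℕ → EuclideanSpace ℝ (Fin m))
    (hek : ∀ k, ek k ∈ interior C ∧ ‖ek k‖ = 1)
    (fk : ℕ → EuclideanSpace ℝ (Fin m) → ℝ)
    (hfk : ∀ k y, fk k y = sSup ((fun z => ⟪y, z⟫ / ⟪ek k, z⟫) '' Z))
    (p : ℕ → EuclideanSpace ℝ (Fin n))
    (hiter : ∀ k : ℕ, F (p k) - F (p (k + 1)) ∈ C ∧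
      ∀ q : EuclideanSpace ℝ (Fin n), F (p k) - F q ∈ C →
        fk k (F (p (k + 1)) + (lam k / 2 * ‖p (k + 1) - p k‖ ^ 2) • ek k)
          ≤ fk k (F q + (lam k / 2 * ‖q - p k‖ ^ 2) • ek k))
    (hΩbar : (⋂ k : ℕ, {q : EuclideanSpace ℝ (Fin n) | F (p k) - F q ∈ C}).Nonempty) :
    (∀ w ∈ ⋂ k : ℕ, {q : EuclideanSpace ℝ (Fin n) | F (p k) - F q ∈ C},
      ∀ k : ℕ, ‖w - p (k + 1)‖ ≤ ‖w - p k‖) ∧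
    (∃ (c : EuclideanSpace ℝ (Fin n)) (r : ℝ), ∀ k : ℕ, p k ∈ Metric.closedBall c r) :=
  proximal_sequence_fejer_general Z hZne hZcomp hZ0 C hC F hFconv lam hlampos ek hek fk hfk p hiter
    hΩbar
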